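/- Uniqueness direction of Shapley's theorem (symmetry + efficiency on unanimity games): for the unanimity game u_T (where u_T(S) = 1 if T ⊆ S and 0 otherwise, T nonempty), any allocation satisfying efficiency, symmetry, and the dummy-player axiom assigns value 1/|T| to each player in T and 0 to players outside T; the Shapley value φᵢ(u_T) indeed equals 1/|T| for i ∈ T and 0 for i ∉ T. -/

import Mathlib

noncomputable def shapley {ι : Type*} [Fintype ι] [DecidableEq ι] (v : Finset ι → ℝ) (i : ι) : ℝ :=
  ∑ S ∈ (Finset.univ.erase i).powerset,
    (((Fintype.card ι - S.card - 1).factorial * S.card.factorial : ℝ) /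
      (Fintype.card ι).factorial) * (v (insert i S) - v S)

open Finset Nat

/-! Outside `T` a player is a dummy and inside `T` any two players are symmetric, so efficiency
forces `ψ = 1 / |T|` on `T`. For the Shapley value, the marginal contribution of `i ∈ T` to `S` is
`1` exactly when `T \ {i} ⊆ S`; grouping these `S` by `|S| = s + j` with `s = |T| - 1` and
`m = n - |T|` leaves `∑ⱼ C(m, j) (m - j)! (s + j)! / (m + s + 1)!`, and since
`C(m, j) (m - j)! (s + j)! = m! s! C(s + j, s)` the hockey-stick identity evaluates it to
`1 / (s + 1)`. -/

theorem Finset.sum_Icc_apply_card {α M : Type*} [DecidableEq α] [AddCommMonoid M]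
    {s t : Finset α} (hst : s ⊆ t) (f : ℕ → M) :
    ∑ u ∈ Icc s t, f #u = ∑ j ∈ range (#t - #s + 1), (#t - #s).choose j • f (#s + j) := by
  have hdisj : ∀ a ∈ (t \ s).powerset, Disjoint s a := fun a ha =>
    disjoint_of_subset_right (mem_powerset.1 ha) disjoint_sdiff
  rw [Icc_eq_image_powerset hst, sum_image fun a ha b hb hab => by
      rw [← union_sdiff_cancel_left (hdisj a ha), ← union_sdiff_cancel_left (hdisj b hb)]
      exact congrArg (· \ s) hab,
    sum_congr rfl fun a ha => by rw [card_union_of_disjoint (hdisj a ha)],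
    sum_powerset_apply_card (fun j => f (#s + j)), card_sdiff_of_subset hst]

theorem sum_range_choose_smul_factorial_mul_factorial_div (m s : ℕ) :
    ∑ j ∈ range (m + 1), m.choose j • ((m - j)! * (s + j)! / (m + s + 1)! : ℝ) = 1 / (s + 1) := by
  have hterm : ∀ j ∈ range (m + 1), m.choose j • ((m - j)! * (s + j)! / (m + s + 1)! : ℝ) =
      m ! * s ! / (m + s + 1)! * (j + s).choose s := by
    intro j hj
    have hjm : j ≤ m := Nat.lt_succ_iff.1 (mem_range.1 hj)
    rw [nsmul_eq_mul, Nat.cast_choose ℝ hjm, Nat.cast_choose ℝ (Nat.le_add_left s j),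
      Nat.add_sub_cancel, add_comm j s]
    field_simp
  rw [sum_congr rfl hterm, ← mul_sum, ← Nat.cast_sum, sum_range_add_choose,
    Nat.cast_choose ℝ (by omega), show m + s + 1 - (s + 1) = m by omega]
  field_simp
  push_cast [Nat.factorial_succ]
  ring

section

variable {ι : Type*} [DecidableEq ι]

def unanimityGame (T S : Finset ι) : ℝ := if T ⊆ S then 1 else 0

variable {T S : Finset ι} {i j : ι}

theorem unanimityGame_eq_zero_of_mem_of_notMem (hi : i ∈ T) (hiS : i ∉ S) :
    unanimityGame T S = 0 :=
  if_neg fun h => hiS (h hi)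

theorem unanimityGame_insert_of_notMem (hi : i ∉ T) (S : Finset ι) :
    unanimityGame T (insert i S) = unanimityGame T S := by
  simp only [unanimityGame, subset_insert_iff_of_notMem hi]

theorem unanimityGame_insert_eq_insert_of_mem (hi : i ∈ T) (hj : j ∈ T) (hiS : i ∉ S)
    (hjS : j ∉ S) : unanimityGame T (insert i S) = unanimityGame T (insert j S) := by
  rcases eq_or_ne i j with rfl | hij
  · rfl
  rw [unanimityGame_eq_zero_of_mem_of_notMem hj (by simp [hij.symm, hjS]),
    unanimityGame_eq_zero_of_mem_of_notMem hi (by simp [hij, hiS])]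

theorem unanimityGame_insert_sub_of_mem (hi : i ∈ T) (hiS : i ∉ S) :
    unanimityGame T (insert i S) - unanimityGame T S = if T.erase i ⊆ S then 1 else 0 := by
  rw [unanimityGame_eq_zero_of_mem_of_notMem hi hiS, sub_zero]
  exact if_congr subset_insert_iff rfl rfl

variable [Fintype ι]

theorem unanimityGame_univ : unanimityGame T univ = 1 :=
  if_pos (subset_univ T)

theorem shapley_eq_zero_of_forall_insert_eq {v : Finset ι → ℝ}
    (hi : ∀ S, i ∉ S → v (insert i S) = v S) : shapley v i = 0 :=
  sum_eq_zero fun S hS => by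
    rw [hi S fun h => notMem_erase i univ (mem_powerset.1 hS h), sub_self, mul_zero]

theorem shapley_unanimityGame_of_mem (hi : i ∈ T) : shapley (unanimityGame T) i = 1 / #T := by
  obtain ⟨s, hs⟩ : ∃ s, #T = s + 1 := Nat.exists_eq_add_one.2 (card_pos.2 ⟨i, hi⟩)
  obtain ⟨m, hm⟩ : ∃ m, Fintype.card ι = m + s + 1 :=
    ⟨Fintype.card ι - #T, by have := card_le_univ T; omega⟩
  have hsub : T.erase i ⊆ univ.erase i := erase_subset_erase i (subset_univ T)
  calc shapley (unanimityGame T) i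
      = ∑ S ∈ Icc (T.erase i) (univ.erase i),
          ((Fintype.card ι - #S - 1)! * (#S)! / (Fintype.card ι)! : ℝ) := by
        rw [shapley, Icc_eq_filter_powerset, sum_filter]
        refine sum_congr rfl fun S hS => ?_
        rw [unanimityGame_insert_sub_of_mem hi fun h => notMem_erase i univ (mem_powerset.1 hS h),
          mul_ite, mul_one, mul_zero]
    _ = ∑ j ∈ range (m + 1), m.choose j • ((m - j)! * (s + j)! / (m + s + 1)! : ℝ) := by
        rw [sum_Icc_apply_card hsub
            fun k => ((Fintype.card ι - k - 1)! * k ! / (Fintype.card ι)! : ℝ),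
          card_erase_of_mem hi, card_erase_of_mem (mem_univ i), Finset.card_univ, hs, hm]
        refine sum_congr (by congr 2; omega) fun j _ => ?_
        congr 5 <;> omega
    _ = 1 / #T := by rw [sum_range_choose_smul_factorial_mul_factorial_div, hs, Nat.cast_succ]

end

theorem unanimity_game_unique_allocation_general {ι : Type*} [Fintype ι] [DecidableEq ι]
    (T : Finset ι) (v : Finset ι → ℝ)
    (hv : ∀ S : Finset ι, v S = if T ⊆ S then 1 else 0)
    (ψ : ι → ℝ)
    (heff : ∑ i, ψ i = v Finset.univ)
    (hsym : ∀ i j : ι,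
      (∀ S : Finset ι, i ∉ S → j ∉ S → v (insert i S) = v (insert j S)) → ψ i = ψ j)
    (hdummy : ∀ i : ι, (∀ S : Finset ι, i ∉ S → v (insert i S) = v S) → ψ i = 0) :
    (∀ i ∈ T, ψ i = 1 / (T.card : ℝ)) ∧ (∀ i ∉ T, ψ i = 0) ∧
      (∀ i ∈ T, shapley v i = 1 / (T.card : ℝ)) ∧ (∀ i ∉ T, shapley v i = 0) := by
  obtain rfl : v = unanimityGame T := funext hv
  have hout : ∀ i ∉ T, ψ i = 0 := fun i hi =>
    hdummy i fun S _ => unanimityGame_insert_of_notMem hi S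
  have hsum : ∑ j ∈ T, ψ j = 1 := by
    rw [sum_subset (subset_univ T) fun j _ => hout j, heff, unanimityGame_univ]
  refine ⟨fun i hi => ?_, hout, fun i hi => shapley_unanimityGame_of_mem hi,
    fun i hi => shapley_eq_zero_of_forall_insert_eq fun S _ => unanimityGame_insert_of_notMem hi S⟩
  have hconst : ∀ j ∈ T, ψ j = ψ i := fun j hj =>
    hsym j i fun S hjS hiS => unanimityGame_insert_eq_insert_of_mem hj hi hjS hiS
  rw [sum_congr rfl hconst, sum_const, nsmul_eq_mul] at hsum
  exact eq_one_div_of_mul_eq_one_right hsum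

theorem unanimity_game_unique_allocation {ι : Type*} [Fintype ι] [DecidableEq ι]
    (T : Finset ι) (hT : T.Nonempty) (v : Finset ι → ℝ)
    (hv : ∀ S : Finset ι, v S = if T ⊆ S then 1 else 0)
    (ψ : ι → ℝ)
    (heff : ∑ i, ψ i = v Finset.univ)
    (hsym : ∀ i j : ι,
      (∀ S : Finset ι, i ∉ S → j ∉ S → v (insert i S) = v (insert j S)) → ψ i = ψ j)
    (hdummy : ∀ i : ι, (∀ S : Finset ι, i ∉ S → v (insert i S) = v S) → ψ i = 0) :
    (∀ i ∈ T, ψ i = 1 / (T.card : ℝ)) ∧ (∀ i ∉ T, ψ i = 0) ∧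
      (∀ i ∈ T, shapley v i = 1 / (T.card : ℝ)) ∧ (∀ i ∉ T, shapley v i = 0) :=
  unanimity_game_unique_allocation_general T v hv ψ heff hsym hdummy
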